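/- Let (A,[·_λ·]) be a Lie conformal algebra and N a Nijenhuis operator on A. Then for all natural numbers k, l: (i) (A, [·_λ·]_{N^k}) is a Lie conformal algebra; (ii) N^l is a Nijenhuis operator on (A, [·_λ·]_{N^k}); (iii) the Lie conformal algebras (A, ([·_λ·]_{N^k})_{N^l}) and (A, [·_λ·]_{N^{k+l}}) coincide; (iv) the brackets [·_λ·]_{N^k} and [·_λ·]_{N^l} are compatible, i.e. every linear combination of them is again a Lie conformal algebra bracket on A; (v) N^l is a homomorphism of Lie conformal algebras from (A, [·_λ·]_{N^{k+l}}) to (A, [·_λ·]_{N^k}). -/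

import Mathlib

/- ------------------------------------------------------------------
Common definitions: λ-polynomials with coefficients in a ℂ[∂]-module,
Lie conformal algebras, modules, cochain complexes, the
Nijenhuis–Richardson bracket, bidegrees, lifts and twistings.
------------------------------------------------------------------- -/

open scoped Classical

noncomputable section

namespace LCAF

/-- `MP k M` : `M`-valued polynomials in the `k` variables `λ₀, …, λ_{k-1}`,
encoded as finitely supported functions on multi-indices. -/
abbrev MP (k : ℕ) (M : Type*) [AddCommGroup M] : Type _ :=
  (Fin k →₀ ℕ) →₀ M

variable {A B M N A₁ A₂ : Type*}

section PolyOps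

variable [AddCommGroup M] [Module ℂ M] [AddCommGroup N] [Module ℂ N]

/-- Apply a linear map to all coefficients of a polynomial. -/
def mapCoeff {k : ℕ} (g : M →ₗ[ℂ] N) (p : MP k M) : MP k N :=
  p.mapRange g (map_zero g)

/-- Multiplication by the monomial `λ^α`. -/
def monMul {k : ℕ} (α : Fin k →₀ ℕ) (p : MP k M) : MP k M :=
  Finsupp.mapDomain (fun β => α + β) p

/-- The variable `λᵢ` as a scalar polynomial. -/
def Xv {k : ℕ} (i : Fin k) : MP k ℂ :=
  Finsupp.single (Finsupp.single i 1) (1 : ℂ)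

/-- Multiplication of an `M`-valued polynomial by a scalar polynomial. -/
def scaleP {k : ℕ} (q : MP k ℂ) (p : MP k M) : MP k M :=
  q.sum fun α r => r • monMul α p

/-- The operator `q + c∂` acting on `M`-valued polynomials. -/
def opnd {k : ℕ} (D : M →ₗ[ℂ] M) (q : MP k ℂ) (c : ℂ) : MP k M → MP k M :=
  fun p => scaleP q p + c • mapCoeff D p

/-- Substitution: in an `M`-valued polynomial in `k` variables, substitute the
`i`-th variable by the affine expression `q i + (c i)·∂` (with `∂ = D` acting on
coefficients), landing in polynomials in `k'` new variables. -/
def substFun {k k' : ℕ} (D : M →ₗ[ℂ] M) (q : Fin k → MP k' ℂ) (c : Fin k → ℂ)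
    (p : MP k M) : MP k' M :=
  p.sum fun α m =>
    ((List.ofFn fun i : Fin k => (opnd D (q i) (c i))^[α i]).foldr (· ∘ ·) id)
      (Finsupp.single 0 m)

/-- Renaming of variables. -/
def renameV {k k' : ℕ} (h : Fin k → Fin k') (p : MP k M) : MP k' M :=
  Finsupp.mapDomain (fun α => Finsupp.mapDomain h α) p

/-- The substitution `λ ↦ -λ-∂` in one variable. -/
def sub1 (D : M →ₗ[ℂ] M) (p : MP 1 M) : MP 1 M :=
  substFun D (fun _ => -(Xv 0)) (fun _ => -1) p

/-- The multi-index of the single variable `λ` in one variable. -/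
def lam1 : Fin 1 →₀ ℕ := Finsupp.single 0 1

end PolyOps

section Binary

variable [AddCommGroup M] [Module ℂ M]

/-- `F` with its variable substituted by the expression `q + c ∂`, in two
variables `λ = λ₀`, `μ = λ₁`. -/
def opE (D : M →ₗ[ℂ] M) (F : A → B → MP 1 M) (q : MP 2 ℂ) (c : ℂ) (a : A) (b : B) :
    MP 2 M :=
  substFun D (fun _ => q) (fun _ => c) (F a b)

/-- `F` applied with polynomial second argument (extended coefficientwise). -/
def opR [AddCommGroup B] [Module ℂ B] (D : M →ₗ[ℂ] M) (F : A → B → MP 1 M)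
    (q : MP 2 ℂ) (c : ℂ) (a : A) (p : MP 2 B) : MP 2 M :=
  p.sum fun β x => monMul β (opE D F q c a x)

/-- `F` applied with polynomial first argument (extended coefficientwise). -/
def opL [AddCommGroup A] [Module ℂ A] (D : M →ₗ[ℂ] M) (F : A → B → MP 1 M)
    (q : MP 2 ℂ) (c : ℂ) (p : MP 2 A) (b : B) : MP 2 M :=
  p.sum fun β x => monMul β (opE D F q c x b)

end Binary

section LCA

variable [AddCommGroup A] [Module ℂ A] [AddCommGroup M] [Module ℂ M]

/-- `(A, D, br)` is a Lie conformal algebra: `br a b` is `[a_λ b]`, an `A`-valued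
polynomial in one variable `λ`. -/
structure IsLCA (D : A →ₗ[ℂ] A) (br : A → A → MP 1 A) : Prop where
  add_left : ∀ a b c : A, br (a + b) c = br a c + br b c
  smul_left : ∀ (r : ℂ) (a b : A), br (r • a) b = r • br a b
  add_right : ∀ a b c : A, br a (b + c) = br a b + br a c
  smul_right : ∀ (r : ℂ) (a b : A), br a (r • b) = r • br a b
  sesq_left : ∀ a b : A, br (D a) b = -(monMul lam1 (br a b))
  sesq_right : ∀ a b : A, br a (D b) = monMul lam1 (br a b) + mapCoeff D (br a b)
  skew : ∀ a b : A, br a b = -(sub1 D (br b a))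
  jacobi : ∀ a b c : A,
    opR D br (Xv 0) 0 a (renameV (fun _ => (1 : Fin 2)) (br b c)) =
      opL D br (Xv 0 + Xv 1) 0 (renameV (fun _ => (0 : Fin 2)) (br a b)) c +
        opR D br (Xv 1) 0 b (renameV (fun _ => (0 : Fin 2)) (br a c))

/-- `(M, DM, rho)` is a module over the Lie conformal algebra `(A, D, br)`. -/
structure IsLCAMod (D : A →ₗ[ℂ] A) (br : A → A → MP 1 A)
    (DM : M →ₗ[ℂ] M) (rho : A → M → MP 1 M) : Prop where
  add_left : ∀ (a b : A) (m : M), rho (a + b) m = rho a m + rho b m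
  smul_left : ∀ (r : ℂ) (a : A) (m : M), rho (r • a) m = r • rho a m
  add_right : ∀ (a : A) (m n : M), rho a (m + n) = rho a m + rho a n
  smul_right : ∀ (r : ℂ) (a : A) (m : M), rho a (r • m) = r • rho a m
  d_left : ∀ (a : A) (m : M), rho (D a) m = -(monMul lam1 (rho a m))
  d_right : ∀ (a : A) (m : M),
    rho a (DM m) = monMul lam1 (rho a m) + mapCoeff DM (rho a m)
  comm : ∀ (a b : A) (m : M),
    opR DM rho (Xv 0) 0 a (renameV (fun _ => (1 : Fin 2)) (rho b m)) -
      opR DM rho (Xv 1) 0 b (renameV (fun _ => (0 : Fin 2)) (rho a m)) =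
    opL DM rho (Xv 0 + Xv 1) 0 (renameV (fun _ => (0 : Fin 2)) (br a b)) m

/-- `phi` is a 2-cocycle of `(A, D, br)` with coefficients in the module
`(M, DM, rho)`. -/
structure IsTwoCocycle (D : A →ₗ[ℂ] A) (br : A → A → MP 1 A)
    (DM : M →ₗ[ℂ] M) (rho : A → M → MP 1 M) (phi : A → A → MP 1 M) : Prop where
  add_left : ∀ (a b c : A), phi (a + b) c = phi a c + phi b c
  smul_left : ∀ (r : ℂ) (a b : A), phi (r • a) b = r • phi a b
  add_right : ∀ (a b c : A), phi a (b + c) = phi a b + phi a c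
  smul_right : ∀ (r : ℂ) (a b : A), phi a (r • b) = r • phi a b
  sesq_left : ∀ a b : A, phi (D a) b = -(monMul lam1 (phi a b))
  sesq_right : ∀ a b : A, phi a (D b) = monMul lam1 (phi a b) + mapCoeff DM (phi a b)
  skew : ∀ a b : A, phi a b = -(sub1 DM (phi b a))
  cocycle : ∀ a b c : A,
    opR DM rho (Xv 0) 0 a (renameV (fun _ => (1 : Fin 2)) (phi b c))
      - opR DM rho (Xv 1) 0 b (renameV (fun _ => (0 : Fin 2)) (phi a c))
      + opR DM rho (-(Xv 0) - Xv 1) (-1) c (renameV (fun _ => (0 : Fin 2)) (phi a b))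
      + opR DM phi (Xv 0) 0 a (renameV (fun _ => (1 : Fin 2)) (br b c))
      - opR DM phi (Xv 1) 0 b (renameV (fun _ => (0 : Fin 2)) (br a c))
      - opL DM phi (Xv 0 + Xv 1) 0 (renameV (fun _ => (0 : Fin 2)) (br a b)) c = 0

/-- `T : M → A` is a relative Rota–Baxter operator. -/
def IsRB (br : A → A → MP 1 A) (DM : M →ₗ[ℂ] M) (rho : A → M → MP 1 M)
    (T : M →ₗ[ℂ] A) : Prop :=
  ∀ m n : M, br (T m) (T n) = mapCoeff T (rho (T m) n - sub1 DM (rho (T n) m))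

/-- `T : M → A` is a `φ`-twisted relative Rota–Baxter operator. -/
def IsTwistedRB (br : A → A → MP 1 A) (DM : M →ₗ[ℂ] M) (rho : A → M → MP 1 M)
    (phi : A → A → MP 1 M) (T : M →ₗ[ℂ] A) : Prop :=
  ∀ m n : M, br (T m) (T n) =
    mapCoeff T (rho (T m) n - sub1 DM (rho (T n) m) + phi (T m) (T n))

/-- Combine an `A`-valued and an `M`-valued polynomial into an `A × M`-valued one. -/
def pairP {k : ℕ} (p : MP k A) (q : MP k M) : MP k (A × M) :=
  Finsupp.mapRange (fun a => (a, (0 : M))) rfl p +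
    Finsupp.mapRange (fun m => ((0 : A), m)) rfl q

/-- The (φ-twisted) semidirect product λ-bracket on `A × M`. -/
def sdBr (br : A → A → MP 1 A) (DM : M →ₗ[ℂ] M) (rho : A → M → MP 1 M)
    (phi : A → A → MP 1 M) : A × M → A × M → MP 1 (A × M) :=
  fun x y => pairP (br x.1 y.1) (rho x.1 y.2 - sub1 DM (rho y.1 x.2) + phi x.1 y.1)

end LCA

section NS

variable [AddCommGroup A] [Module ℂ A]

/-- The λ-bracket `[a_λ b] = a∘_λ b - b∘_{-λ-∂} a + a∨_λ b` attached to a pair of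
λ-multiplications. -/
def lieNS (D : A →ₗ[ℂ] A) (o v : A → A → MP 1 A) : A → A → MP 1 A :=
  fun a b => o a b - sub1 D (o b a) + v a b

/-- `(A, ∘_λ, ∨_λ)` is an NS-Lie conformal algebra. -/
structure IsNSLie (D : A →ₗ[ℂ] A) (o v : A → A → MP 1 A) : Prop where
  o_add_left : ∀ a b c : A, o (a + b) c = o a c + o b c
  o_smul_left : ∀ (r : ℂ) (a b : A), o (r • a) b = r • o a b
  o_add_right : ∀ a b c : A, o a (b + c) = o a b + o a c
  o_smul_right : ∀ (r : ℂ) (a b : A), o a (r • b) = r • o a b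
  o_sesq_left : ∀ a b : A, o (D a) b = -(monMul lam1 (o a b))
  o_sesq_right : ∀ a b : A, o a (D b) = monMul lam1 (o a b) + mapCoeff D (o a b)
  v_add_left : ∀ a b c : A, v (a + b) c = v a c + v b c
  v_smul_left : ∀ (r : ℂ) (a b : A), v (r • a) b = r • v a b
  v_add_right : ∀ a b c : A, v a (b + c) = v a b + v a c
  v_smul_right : ∀ (r : ℂ) (a b : A), v a (r • b) = r • v a b
  v_sesq_left : ∀ a b : A, v (D a) b = -(monMul lam1 (v a b))
  v_sesq_right : ∀ a b : A, v a (D b) = monMul lam1 (v a b) + mapCoeff D (v a b)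
  v_skew : ∀ a b : A, v a b = -(sub1 D (v b a))
  ns1 : ∀ a b c : A,
    opL D o (Xv 0 + Xv 1) 0 (renameV (fun _ => (0 : Fin 2)) (o a b)) c
      - opR D o (Xv 0) 0 a (renameV (fun _ => (1 : Fin 2)) (o b c))
      - opL D o (Xv 0 + Xv 1) 0 (renameV (fun _ => (1 : Fin 2)) (o b a)) c
      + opR D o (Xv 1) 0 b (renameV (fun _ => (0 : Fin 2)) (o a c))
      + opL D o (Xv 0 + Xv 1) 0 (renameV (fun _ => (0 : Fin 2)) (v a b)) c = 0
  ns2 : ∀ a b c : A,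
    opR D v (Xv 0) 0 a (renameV (fun _ => (1 : Fin 2)) (lieNS D o v b c))
      - opL D v (Xv 0 + Xv 1) 0 (renameV (fun _ => (0 : Fin 2)) (lieNS D o v a b)) c
      - opR D v (Xv 1) 0 b (renameV (fun _ => (0 : Fin 2)) (lieNS D o v a c))
      + opR D o (Xv 0) 0 a (renameV (fun _ => (1 : Fin 2)) (v b c))
      - opR D o (Xv 1) 0 b (renameV (fun _ => (0 : Fin 2)) (v a c))
      + opR D o (-(Xv 0) - Xv 1) (-1) c (renameV (fun _ => (0 : Fin 2)) (v a b)) = 0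

/-- `(A, ≻_λ, ≺_λ, ⋎_λ)` is a conformal NS-algebra. -/
structure IsConfNS (D : A →ₗ[ℂ] A) (su pr cu : A → A → MP 1 A) : Prop where
  su_add_left : ∀ a b c : A, su (a + b) c = su a c + su b c
  su_smul_left : ∀ (r : ℂ) (a b : A), su (r • a) b = r • su a b
  su_add_right : ∀ a b c : A, su a (b + c) = su a b + su a c
  su_smul_right : ∀ (r : ℂ) (a b : A), su a (r • b) = r • su a b
  su_sesq_left : ∀ a b : A, su (D a) b = -(monMul lam1 (su a b))
  su_sesq_right : ∀ a b : A, su a (D b) = monMul lam1 (su a b) + mapCoeff D (su a b)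
  pr_add_left : ∀ a b c : A, pr (a + b) c = pr a c + pr b c
  pr_smul_left : ∀ (r : ℂ) (a b : A), pr (r • a) b = r • pr a b
  pr_add_right : ∀ a b c : A, pr a (b + c) = pr a b + pr a c
  pr_smul_right : ∀ (r : ℂ) (a b : A), pr a (r • b) = r • pr a b
  pr_sesq_left : ∀ a b : A, pr (D a) b = -(monMul lam1 (pr a b))
  pr_sesq_right : ∀ a b : A, pr a (D b) = monMul lam1 (pr a b) + mapCoeff D (pr a b)
  cu_add_left : ∀ a b c : A, cu (a + b) c = cu a c + cu b c
  cu_smul_left : ∀ (r : ℂ) (a b : A), cu (r • a) b = r • cu a b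
  cu_add_right : ∀ a b c : A, cu a (b + c) = cu a b + cu a c
  cu_smul_right : ∀ (r : ℂ) (a b : A), cu a (r • b) = r • cu a b
  cu_sesq_left : ∀ a b : A, cu (D a) b = -(monMul lam1 (cu a b))
  cu_sesq_right : ∀ a b : A, cu a (D b) = monMul lam1 (cu a b) + mapCoeff D (cu a b)
  ax1 : ∀ x y z : A,
    opR D su (Xv 0) 0 x (renameV (fun _ => (1 : Fin 2)) (su y z)) =
      opL D su (Xv 0 + Xv 1) 0
        (renameV (fun _ => (0 : Fin 2)) (su x y + pr x y + cu x y)) z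
  ax2 : ∀ x y z : A,
    opR D pr (Xv 0) 0 x (renameV (fun _ => (1 : Fin 2)) (su y z + pr y z + cu y z)) =
      opL D pr (Xv 0 + Xv 1) 0 (renameV (fun _ => (0 : Fin 2)) (pr x y)) z
  ax3 : ∀ x y z : A,
    opR D su (Xv 0) 0 x (renameV (fun _ => (1 : Fin 2)) (pr y z)) =
      opL D pr (Xv 0 + Xv 1) 0 (renameV (fun _ => (0 : Fin 2)) (su x y)) z
  ax4 : ∀ x y z : A,
    opR D su (Xv 0) 0 x (renameV (fun _ => (1 : Fin 2)) (cu y z)) -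
        opL D cu (Xv 0 + Xv 1) 0
          (renameV (fun _ => (0 : Fin 2)) (su x y + pr x y + cu x y)) z =
      opL D pr (Xv 0 + Xv 1) 0 (renameV (fun _ => (0 : Fin 2)) (cu x y)) z -
        opR D cu (Xv 0) 0 x (renameV (fun _ => (1 : Fin 2)) (su y z + pr y z + cu y z))

/-- `N` is a Nijenhuis operator on the Lie conformal algebra `(A, D, br)`. -/
def IsNijenhuis (D : A →ₗ[ℂ] A) (br : A → A → MP 1 A) (N : A →ₗ[ℂ] A) : Prop :=
  (∀ a : A, N (D a) = D (N a)) ∧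
  ∀ a b : A, br (N a) (N b) =
    mapCoeff N (br (N a) b + br a (N b) - mapCoeff N (br a b))

/-- The deformed bracket `[a_λ b]_N`. -/
def deformBr (br : A → A → MP 1 A) (N : A →ₗ[ℂ] A) : A → A → MP 1 A :=
  fun a b => br (N a) b + br a (N b) - mapCoeff N (br a b)

end NS

/- ------------------------  cochains  ------------------------ -/

/-- `RawC n A M` : the underlying maps of cochains in `C^{n+1}(A, M)`:
`n+1` arguments from `A`, values in `M`-valued polynomials in `n` variables. -/
abbrev RawC (n : ℕ) (A : Type*) (M : Type*) [AddCommGroup M] : Type _ :=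
  (Fin (n + 1) → A) → MP n M

section CochainDefs

variable [AddCommGroup A] [Module ℂ A] [AddCommGroup M] [Module ℂ M]

/-- The scalar-polynomial part of the expression for `λ_t`, where the last
variable is replaced by `λ† = -λ₀ - ⋯ - λ_{N-1} - ∂`. -/
def exprQ {N : ℕ} (t : Fin (N + 1)) : MP N ℂ :=
  if h : t = Fin.last N then -(∑ i : Fin N, Xv i) else Xv (t.castPred h)

/-- The `∂`-coefficient of the expression for `λ_t`. -/
def exprC {N : ℕ} (t : Fin (N + 1)) : ℂ :=
  if t = Fin.last N then -1 else 0

/-- `f` is a cochain in `C^{n+1}(A, M)` (conformal sesquilinearity, multilinearity,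
and skew-symmetry with the substitution `λ_{last} ↦ λ†`). -/
structure IsCochain {n : ℕ} (DA : A →ₗ[ℂ] A) (DM : M →ₗ[ℂ] M) (f : RawC n A M) :
    Prop where
  map_add : ∀ (a : Fin (n + 1) → A) (i : Fin (n + 1)) (x y : A),
    f (Function.update a i (x + y)) =
      f (Function.update a i x) + f (Function.update a i y)
  map_smul : ∀ (a : Fin (n + 1) → A) (i : Fin (n + 1)) (r : ℂ) (x : A),
    f (Function.update a i (r • x)) = r • f (Function.update a i x)
  sesq : ∀ (a : Fin (n + 1) → A) (i : Fin n),
    f (Function.update a i.castSucc (DA (a i.castSucc))) =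
      -(monMul (Finsupp.single i 1) (f a))
  sesq_last : ∀ a : Fin (n + 1) → A,
    f (Function.update a (Fin.last n) (DA (a (Fin.last n)))) =
      (∑ i : Fin n, monMul (Finsupp.single i 1) (f a)) + mapCoeff DM (f a)
  skew : ∀ (σ : Equiv.Perm (Fin (n + 1))) (a : Fin (n + 1) → A),
    f a = ((Equiv.Perm.sign σ : ℤˣ) : ℤ) •
      substFun DM (fun j : Fin n => exprQ (σ j.castSucc))
        (fun j : Fin n => exprC (σ j.castSucc)) (f (a ∘ σ))

/-- `(t, N-t)`-unshuffles : permutations strictly increasing on the first `t`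
positions and on the remaining positions. -/
def IsUnsh {N : ℕ} (t : ℕ) (σ : Equiv.Perm (Fin N)) : Prop :=
  ∀ i j : Fin N, i < j → (j.val < t ∨ t ≤ i.val) → σ i < σ j

/-- The `⋄`-product (unshuffle-sum insertion) of cochains:
`f ∈ C^{p+1}(A,A)`, `g ∈ C^{q+1}(A,A)`, `f⋄g ∈ C^{p+q+1}(A,A)`. -/
def diamond {p q : ℕ} (DA : A →ₗ[ℂ] A) (f : RawC p A A) (g : RawC q A A) :
    RawC (p + q) A A := fun a =>
  ∑ σ ∈ Finset.univ.filter (fun σ : Equiv.Perm (Fin (p + q + 1)) => IsUnsh (q + 1) σ),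
    ((Equiv.Perm.sign σ : ℤˣ) : ℤ) •
      substFun DA
        (fun v : Fin (p + q) =>
          if v.val = q then
            ∑ i : Fin (q + 1), exprQ (σ (Fin.castLE (by omega) i))
          else exprQ (σ v.castSucc))
        (fun v : Fin (p + q) =>
          if v.val = q then
            ∑ i : Fin (q + 1), exprC (σ (Fin.castLE (by omega) i))
          else exprC (σ v.castSucc))
        ((g fun i : Fin (q + 1) => a (σ (Fin.castLE (by omega) i))).sum fun β x =>
          monMul
            (Finsupp.mapDomain
              (fun i : Fin q => (Fin.cast (by omega) (Fin.castAdd p i) : Fin (p + q))) β)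
            (renameV (fun j : Fin p => (Fin.cast (by omega) (Fin.natAdd q j) : Fin (p + q)))
              (f (Fin.cons x fun j : Fin p =>
                a (σ (Fin.cast (by omega) (Fin.natAdd (q + 1) j)))))))

/-- Transport a raw cochain along an equality of degrees. -/
def castRaw {m n : ℕ} (h : m = n) (f : RawC m A M) : RawC n A M := h ▸ f

/-- The Nijenhuis–Richardson bracket `[f,g] = f⋄g - (-1)^{pq} g⋄f`. -/
def nr {p q : ℕ} (DA : A →ₗ[ℂ] A) (f : RawC p A A) (g : RawC q A A) :
    RawC (p + q) A A :=
  diamond DA f g - ((-1 : ℤ)) ^ (p * q) • castRaw (Nat.add_comm q p) (diamond DA g f)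

end CochainDefs

section Bidegree

variable [AddCommGroup A₁] [Module ℂ A₁] [AddCommGroup A₂] [Module ℂ A₂]

/-- `x` is a pure element: in `A₁` (if `b`) or in `A₂` (if `¬b`). -/
def IsPure (x : A₁ × A₂) (b : Bool) : Prop :=
  if b then x.2 = 0 else x.1 = 0

/-- `f ∈ C^{n+1}(A₁⊕A₂, A₁⊕A₂)` has bidegree `k|l`. -/
def HasBidegree {n : ℕ} (f : RawC n (A₁ × A₂) (A₁ × A₂)) (k l : ℤ) : Prop :=
  k + l = (n : ℤ) ∧
  ∀ (P : Fin (n + 1) → Bool) (a : Fin (n + 1) → A₁ × A₂),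
    (∀ i, IsPure (a i) (P i)) →
    ((((Finset.univ.filter fun i => P i = true).card : ℤ) = k + 1 →
        ∀ β, ((f a) β).2 = 0) ∧
      ((((Finset.univ.filter fun i => P i = true).card : ℤ) = k) →
        ∀ β, ((f a) β).1 = 0) ∧
      (((((Finset.univ.filter fun i => P i = true).card : ℤ) ≠ k + 1) ∧
        (((Finset.univ.filter fun i => P i = true).card : ℤ) ≠ k)) → f a = 0))

/-- The lift of `f ∈ C^{n+1}(A₂, A₁)` to a cochain on `A₁ ⊕ A₂`. -/
def liftC {n : ℕ} (f : RawC n A₂ A₁) : RawC n (A₁ × A₂) (A₁ × A₂) :=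
  fun x => Finsupp.mapRange (fun a => (a, (0 : A₂))) rfl (f fun i => (x i).2)

/-- Recover `f ∈ C^{n+1}(A₂, A₁)` from (a lift of) a cochain on `A₁ ⊕ A₂`. -/
def downC {n : ℕ} (g : RawC n (A₁ × A₂) (A₁ × A₂)) : RawC n A₂ A₁ :=
  fun v => Finsupp.mapRange Prod.fst rfl (g fun i => ((0 : A₁), v i))

/-- The lift of a `ℂ[∂]`-module homomorphism `H : A₂ → A₁` as a `1`-cochain on
`A₁ ⊕ A₂`. -/
def hatHom (H : A₂ →ₗ[ℂ] A₁) : RawC 0 (A₁ × A₂) (A₁ × A₂) :=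
  fun x => Finsupp.single 0 (H ((x 0).2), (0 : A₂))

/-- `H : A₂ → A₁` viewed as an element of `C^1(A₂, A₁)`. -/
def hatC1 (H : A₂ →ₗ[ℂ] A₁) : RawC 0 A₂ A₁ :=
  fun v => Finsupp.single 0 (H (v 0))

/-- The structure map of a λ-bracket as a 2-cochain. -/
def toC2 {A : Type*} [AddCommGroup A] (br : A → A → MP 1 A) : RawC 1 A A :=
  fun a => br (a 0) (a 1)

/-- `l₁ = d_{μ̂₂}` on `C^*(A₂, A₁)`. -/
def ell1 (DA : (A₁ × A₂) →ₗ[ℂ] (A₁ × A₂)) (mu2 : RawC 1 (A₁ × A₂) (A₁ × A₂))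
    {n : ℕ} (f : RawC n A₂ A₁) : RawC (n + 1) A₂ A₁ :=
  downC (castRaw (show 1 + n = n + 1 by omega) (nr DA mu2 (liftC f)))

/-- `l₂ = [·,·]_{μ̂₁}` on `C^*(A₂, A₁)`. -/
def ell2 (DA : (A₁ × A₂) →ₗ[ℂ] (A₁ × A₂)) (mu1 : RawC 1 (A₁ × A₂) (A₁ × A₂))
    {m n : ℕ} (f : RawC m A₂ A₁) (g : RawC n A₂ A₁) : RawC (m + n + 1) A₂ A₁ :=
  ((-1 : ℤ)) ^ m •
    downC (castRaw (show 1 + m + n = m + n + 1 by omega)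
      (nr DA (nr DA mu1 (liftC f)) (liftC g)))

/-- `l₃ = [·,·,·]_{φ̂₁}` on `C^*(A₂, A₁)`. -/
def ell3 (DA : (A₁ × A₂) →ₗ[ℂ] (A₁ × A₂)) (phi1 : RawC 1 (A₁ × A₂) (A₁ × A₂))
    {m n k : ℕ} (f : RawC m A₂ A₁) (g : RawC n A₂ A₁) (h : RawC k A₂ A₁) :
    RawC (m + n + k + 1) A₂ A₁ :=
  ((-1 : ℤ)) ^ n •
    downC (castRaw (show 1 + m + n + k = m + n + k + 1 by omega)
      (nr DA (nr DA (nr DA phi1 (liftC f)) (liftC g)) (liftC h)))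

/-- `Π` is a twilled Lie conformal algebra structure on `A₁ ⊕ A₂`. -/
def IsTwilledStr (DA : (A₁ × A₂) →ₗ[ℂ] (A₁ × A₂))
    (Pi : RawC 1 (A₁ × A₂) (A₁ × A₂)) : Prop :=
  IsCochain DA DA Pi ∧ nr DA Pi Pi = 0 ∧
    ∃ m1 m2 : RawC 1 (A₁ × A₂) (A₁ × A₂),
      HasBidegree m1 1 0 ∧ HasBidegree m2 0 1 ∧ Pi = m1 + m2

/-- `Π` is a quasi-twilled Lie conformal algebra structure on `A₁ ⊕ A₂`. -/
def IsQuasiTwilledStr (DA : (A₁ × A₂) →ₗ[ℂ] (A₁ × A₂))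
    (Pi : RawC 1 (A₁ × A₂) (A₁ × A₂)) : Prop :=
  IsCochain DA DA Pi ∧ nr DA Pi Pi = 0 ∧
    ∃ p1 m1 m2 : RawC 1 (A₁ × A₂) (A₁ × A₂),
      HasBidegree p1 2 (-1) ∧ HasBidegree m1 1 0 ∧ HasBidegree m2 0 1 ∧
        Pi = p1 + m1 + m2

end Bidegree

section Twist

variable [AddCommGroup A] [Module ℂ A]

/-- The twisting `Π^H = e^{X_Ĥ}(Π)` of a `2`-cochain by (the lift of) a
`ℂ[∂]`-module homomorphism. -/
def twist (DA : A →ₗ[ℂ] A) (Pi : RawC 1 A A) (hH : RawC 0 A A) : RawC 1 A A :=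
  Pi + nr DA Pi hH + (2 : ℂ)⁻¹ • nr DA (nr DA Pi hH) hH
    + (6 : ℂ)⁻¹ • nr DA (nr DA (nr DA Pi hH) hH) hH

end Twist

end LCAF

namespace LCAF

section GradedStructures

variable {A₁ A₂ : Type*} [AddCommGroup A₁] [Module ℂ A₁] [AddCommGroup A₂] [Module ℂ A₂]

/-- The subspace of `⊕ₙ RawC n A₂ A₁` cut out by `P` (placing `RawC n` in degree
`n+1`), equipped with `d` and `br`, is a differential graded Lie algebra. -/
structure IsDGLAOn
    (P : ∀ {n : ℕ}, RawC n A₂ A₁ → Prop)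
    (d : ∀ {n : ℕ}, RawC n A₂ A₁ → RawC (n + 1) A₂ A₁)
    (br : ∀ {m n : ℕ}, RawC m A₂ A₁ → RawC n A₂ A₁ → RawC (m + n + 1) A₂ A₁) :
    Prop where
  mem_zero : ∀ {n : ℕ}, P (0 : RawC n A₂ A₁)
  mem_add : ∀ {n : ℕ} (f g : RawC n A₂ A₁), P f → P g → P (f + g)
  mem_smul : ∀ {n : ℕ} (r : ℂ) (f : RawC n A₂ A₁), P f → P (r • f)
  mem_d : ∀ {n : ℕ} (f : RawC n A₂ A₁), P f → P (d f)
  mem_br : ∀ {m n : ℕ} (f : RawC m A₂ A₁) (g : RawC n A₂ A₁), P f → P g → P (br f g)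
  d_add : ∀ {n : ℕ} (f g : RawC n A₂ A₁), P f → P g → d (f + g) = d f + d g
  d_smul : ∀ {n : ℕ} (r : ℂ) (f : RawC n A₂ A₁), P f → d (r • f) = r • d f
  br_add_left : ∀ {m n : ℕ} (f f' : RawC m A₂ A₁) (g : RawC n A₂ A₁),
    P f → P f' → P g → br (f + f') g = br f g + br f' g
  br_smul_left : ∀ {m n : ℕ} (r : ℂ) (f : RawC m A₂ A₁) (g : RawC n A₂ A₁),
    P f → P g → br (r • f) g = r • br f g
  br_add_right : ∀ {m n : ℕ} (f : RawC m A₂ A₁) (g g' : RawC n A₂ A₁),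
    P f → P g → P g' → br f (g + g') = br f g + br f g'
  br_smul_right : ∀ {m n : ℕ} (r : ℂ) (f : RawC m A₂ A₁) (g : RawC n A₂ A₁),
    P f → P g → br f (r • g) = r • br f g
  d_squared : ∀ {n : ℕ} (f : RawC n A₂ A₁), P f → d (d f) = 0
  skew : ∀ {m n : ℕ} (f : RawC m A₂ A₁) (g : RawC n A₂ A₁), P f → P g →
    br f g = ((-1 : ℤ)) ^ ((m + 1) * (n + 1) + 1) •
      castRaw (show n + m + 1 = m + n + 1 by omega) (br g f)
  leibniz : ∀ {m n : ℕ} (f : RawC m A₂ A₁) (g : RawC n A₂ A₁), P f → P g →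
    castRaw (show m + n + 1 + 1 = m + n + 2 by omega) (d (br f g)) =
      castRaw (show m + 1 + n + 1 = m + n + 2 by omega) (br (d f) g) +
      ((-1 : ℤ)) ^ (m + 1) •
        castRaw (show m + (n + 1) + 1 = m + n + 2 by omega) (br f (d g))
  jacobi : ∀ {m n k : ℕ} (f : RawC m A₂ A₁) (g : RawC n A₂ A₁) (h : RawC k A₂ A₁),
    P f → P g → P h →
    castRaw (show m + (n + k + 1) + 1 = m + n + k + 2 by omega) (br f (br g h)) =
      castRaw (show m + n + 1 + k + 1 = m + n + k + 2 by omega) (br (br f g) h) +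
      ((-1 : ℤ)) ^ ((m + 1) * (n + 1)) •
        castRaw (show n + (m + k + 1) + 1 = m + n + k + 2 by omega) (br g (br f h))

/-- The subspace of `⊕ₙ RawC n A₂ A₁` cut out by `P` (placing `RawC n` in degree
`n+1`), with operations `l₁, l₂, l₃` (and `lᵢ = 0` for `i ≥ 4`), is an
`L∞`-algebra: graded skew-symmetry and the higher Jacobi identities
`∑_{i+j=n+1} (-1)^i ∑_{σ ∈ Sh(i,n-i)} χ(σ) l_j(l_i(x_{σ(1)},…),…) = 0`
(only `n = 1, …, 5` are nontrivial since `lᵢ = 0` for `i ≥ 4`). -/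
structure IsLInftyOn
    (P : ∀ {n : ℕ}, RawC n A₂ A₁ → Prop)
    (l1 : ∀ {n : ℕ}, RawC n A₂ A₁ → RawC (n + 1) A₂ A₁)
    (l2 : ∀ {m n : ℕ}, RawC m A₂ A₁ → RawC n A₂ A₁ → RawC (m + n + 1) A₂ A₁)
    (l3 : ∀ {m n k : ℕ}, RawC m A₂ A₁ → RawC n A₂ A₁ → RawC k A₂ A₁ →
      RawC (m + n + k + 1) A₂ A₁) : Prop where
  mem_zero : ∀ {n : ℕ}, P (0 : RawC n A₂ A₁)
  mem_add : ∀ {n : ℕ} (f g : RawC n A₂ A₁), P f → P g → P (f + g)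
  mem_smul : ∀ {n : ℕ} (r : ℂ) (f : RawC n A₂ A₁), P f → P (r • f)
  mem_l1 : ∀ {n : ℕ} (f : RawC n A₂ A₁), P f → P (l1 f)
  mem_l2 : ∀ {m n : ℕ} (f : RawC m A₂ A₁) (g : RawC n A₂ A₁), P f → P g → P (l2 f g)
  mem_l3 : ∀ {m n k : ℕ} (f : RawC m A₂ A₁) (g : RawC n A₂ A₁) (h : RawC k A₂ A₁),
    P f → P g → P h → P (l3 f g h)
  l1_add : ∀ {n : ℕ} (f g : RawC n A₂ A₁), P f → P g → l1 (f + g) = l1 f + l1 g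
  l1_smul : ∀ {n : ℕ} (r : ℂ) (f : RawC n A₂ A₁), P f → l1 (r • f) = r • l1 f
  l2_add_left : ∀ {m n : ℕ} (f f' : RawC m A₂ A₁) (g : RawC n A₂ A₁),
    P f → P f' → P g → l2 (f + f') g = l2 f g + l2 f' g
  l2_smul_left : ∀ {m n : ℕ} (r : ℂ) (f : RawC m A₂ A₁) (g : RawC n A₂ A₁),
    P f → P g → l2 (r • f) g = r • l2 f g
  l2_add_right : ∀ {m n : ℕ} (f : RawC m A₂ A₁) (g g' : RawC n A₂ A₁),
    P f → P g → P g' → l2 f (g + g') = l2 f g + l2 f g'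
  l2_smul_right : ∀ {m n : ℕ} (r : ℂ) (f : RawC m A₂ A₁) (g : RawC n A₂ A₁),
    P f → P g → l2 f (r • g) = r • l2 f g
  l3_add₁ : ∀ {m n k : ℕ} (f f' : RawC m A₂ A₁) (g : RawC n A₂ A₁) (h : RawC k A₂ A₁),
    P f → P f' → P g → P h → l3 (f + f') g h = l3 f g h + l3 f' g h
  l3_smul₁ : ∀ {m n k : ℕ} (r : ℂ) (f : RawC m A₂ A₁) (g : RawC n A₂ A₁)
    (h : RawC k A₂ A₁), P f → P g → P h → l3 (r • f) g h = r • l3 f g h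
  l3_add₂ : ∀ {m n k : ℕ} (f : RawC m A₂ A₁) (g g' : RawC n A₂ A₁) (h : RawC k A₂ A₁),
    P f → P g → P g' → P h → l3 f (g + g') h = l3 f g h + l3 f g' h
  l3_smul₂ : ∀ {m n k : ℕ} (r : ℂ) (f : RawC m A₂ A₁) (g : RawC n A₂ A₁)
    (h : RawC k A₂ A₁), P f → P g → P h → l3 f (r • g) h = r • l3 f g h
  l3_add₃ : ∀ {m n k : ℕ} (f : RawC m A₂ A₁) (g : RawC n A₂ A₁) (h h' : RawC k A₂ A₁),
    P f → P g → P h → P h' → l3 f g (h + h') = l3 f g h + l3 f g h'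
  l3_smul₃ : ∀ {m n k : ℕ} (r : ℂ) (f : RawC m A₂ A₁) (g : RawC n A₂ A₁)
    (h : RawC k A₂ A₁), P f → P g → P h → l3 f g (r • h) = r • l3 f g h
  skew2 : ∀ {m n : ℕ} (f : RawC m A₂ A₁) (g : RawC n A₂ A₁), P f → P g →
    l2 f g = ((-1 : ℤ)) ^ ((m + 1) * (n + 1) + 1) •
      castRaw (show n + m + 1 = m + n + 1 by omega) (l2 g f)
  skew3a : ∀ {m n k : ℕ} (f : RawC m A₂ A₁) (g : RawC n A₂ A₁) (h : RawC k A₂ A₁),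
    P f → P g → P h →
    l3 f g h = ((-1 : ℤ)) ^ ((m + 1) * (n + 1) + 1) •
      castRaw (show n + m + k + 1 = m + n + k + 1 by omega) (l3 g f h)
  skew3b : ∀ {m n k : ℕ} (f : RawC m A₂ A₁) (g : RawC n A₂ A₁) (h : RawC k A₂ A₁),
    P f → P g → P h →
    l3 f g h = ((-1 : ℤ)) ^ ((n + 1) * (k + 1) + 1) •
      castRaw (show m + k + n + 1 = m + n + k + 1 by omega) (l3 f h g)
  jac1 : ∀ {n : ℕ} (f : RawC n A₂ A₁), P f → l1 (l1 f) = 0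
  jac2 : ∀ {m n : ℕ} (f : RawC m A₂ A₁) (g : RawC n A₂ A₁), P f → P g →
    castRaw (show m + n + 1 + 1 = m + n + 2 by omega) (l1 (l2 f g))
      - castRaw (show m + 1 + n + 1 = m + n + 2 by omega) (l2 (l1 f) g)
      + ((-1 : ℤ)) ^ ((m + 1) * (n + 1)) •
          castRaw (show n + 1 + m + 1 = m + n + 2 by omega) (l2 (l1 g) f)
      = 0
  jac3 : ∀ {m n k : ℕ} (f : RawC m A₂ A₁) (g : RawC n A₂ A₁) (h : RawC k A₂ A₁),
    P f → P g → P h →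
    -(castRaw (show m + 1 + n + k + 1 = m + n + k + 2 by omega) (l3 (l1 f) g h))
      + ((-1 : ℤ)) ^ ((m + 1) * (n + 1)) •
          castRaw (show n + 1 + m + k + 1 = m + n + k + 2 by omega) (l3 (l1 g) f h)
      - ((-1 : ℤ)) ^ ((k + 1) * ((m + 1) + (n + 1))) •
          castRaw (show k + 1 + m + n + 1 = m + n + k + 2 by omega) (l3 (l1 h) f g)
      + castRaw (show m + n + 1 + k + 1 = m + n + k + 2 by omega) (l2 (l2 f g) h)
      - ((-1 : ℤ)) ^ ((n + 1) * (k + 1)) •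
          castRaw (show m + k + 1 + n + 1 = m + n + k + 2 by omega) (l2 (l2 f h) g)
      + ((-1 : ℤ)) ^ ((m + 1) * ((n + 1) + (k + 1))) •
          castRaw (show n + k + 1 + m + 1 = m + n + k + 2 by omega) (l2 (l2 g h) f)
      - castRaw (show m + n + k + 1 + 1 = m + n + k + 2 by omega) (l1 (l3 f g h))
      = 0
  jac4 : ∀ {m n k l : ℕ} (f : RawC m A₂ A₁) (g : RawC n A₂ A₁) (h : RawC k A₂ A₁)
    (e : RawC l A₂ A₁), P f → P g → P h → P e →
    castRaw (show m + n + 1 + k + l + 1 = m + n + k + l + 2 by omega) (l3 (l2 f g) h e)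
      - ((-1 : ℤ)) ^ ((n + 1) * (k + 1)) •
          castRaw (show m + k + 1 + n + l + 1 = m + n + k + l + 2 by omega)
            (l3 (l2 f h) g e)
      + ((-1 : ℤ)) ^ ((l + 1) * ((n + 1) + (k + 1))) •
          castRaw (show m + l + 1 + n + k + 1 = m + n + k + l + 2 by omega)
            (l3 (l2 f e) g h)
      + ((-1 : ℤ)) ^ ((m + 1) * ((n + 1) + (k + 1))) •
          castRaw (show n + k + 1 + m + l + 1 = m + n + k + l + 2 by omega)
            (l3 (l2 g h) f e)
      - ((-1 : ℤ)) ^ ((m + 1) * (n + 1) + (m + 1) * (l + 1) + (k + 1) * (l + 1)) •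
          castRaw (show n + l + 1 + m + k + 1 = m + n + k + l + 2 by omega)
            (l3 (l2 g e) f h)
      + ((-1 : ℤ)) ^ (((m + 1) + (n + 1)) * ((k + 1) + (l + 1))) •
          castRaw (show k + l + 1 + m + n + 1 = m + n + k + l + 2 by omega)
            (l3 (l2 h e) f g)
      - castRaw (show m + n + k + 1 + l + 1 = m + n + k + l + 2 by omega)
          (l2 (l3 f g h) e)
      + ((-1 : ℤ)) ^ ((k + 1) * (l + 1)) •
          castRaw (show m + n + l + 1 + k + 1 = m + n + k + l + 2 by omega)
            (l2 (l3 f g e) h)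
      - ((-1 : ℤ)) ^ ((n + 1) * ((k + 1) + (l + 1))) •
          castRaw (show m + k + l + 1 + n + 1 = m + n + k + l + 2 by omega)
            (l2 (l3 f h e) g)
      + ((-1 : ℤ)) ^ ((m + 1) * ((n + 1) + (k + 1) + (l + 1))) •
          castRaw (show n + k + l + 1 + m + 1 = m + n + k + l + 2 by omega)
            (l2 (l3 g h e) f)
      = 0
  jac5 : ∀ {a b c d e : ℕ} (x1 : RawC a A₂ A₁) (x2 : RawC b A₂ A₁) (x3 : RawC c A₂ A₁)
    (x4 : RawC d A₂ A₁) (x5 : RawC e A₂ A₁), P x1 → P x2 → P x3 → P x4 → P x5 →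
    castRaw (show a + b + c + 1 + d + e + 1 = a + b + c + d + e + 2 by omega)
        (l3 (l3 x1 x2 x3) x4 x5)
      - ((-1 : ℤ)) ^ ((c + 1) * (d + 1)) •
          castRaw (show a + b + d + 1 + c + e + 1 = a + b + c + d + e + 2 by omega)
            (l3 (l3 x1 x2 x4) x3 x5)
      + ((-1 : ℤ)) ^ ((e + 1) * ((c + 1) + (d + 1))) •
          castRaw (show a + b + e + 1 + c + d + 1 = a + b + c + d + e + 2 by omega)
            (l3 (l3 x1 x2 x5) x3 x4)
      + ((-1 : ℤ)) ^ ((b + 1) * ((c + 1) + (d + 1))) •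
          castRaw (show a + c + d + 1 + b + e + 1 = a + b + c + d + e + 2 by omega)
            (l3 (l3 x1 x3 x4) x2 x5)
      - ((-1 : ℤ)) ^ ((b + 1) * (c + 1) + (b + 1) * (e + 1) + (d + 1) * (e + 1)) •
          castRaw (show a + c + e + 1 + b + d + 1 = a + b + c + d + e + 2 by omega)
            (l3 (l3 x1 x3 x5) x2 x4)
      + ((-1 : ℤ)) ^ (((b + 1) + (c + 1)) * ((d + 1) + (e + 1))) •
          castRaw (show a + d + e + 1 + b + c + 1 = a + b + c + d + e + 2 by omega)
            (l3 (l3 x1 x4 x5) x2 x3)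
      - ((-1 : ℤ)) ^ ((a + 1) * ((b + 1) + (c + 1) + (d + 1))) •
          castRaw (show b + c + d + 1 + a + e + 1 = a + b + c + d + e + 2 by omega)
            (l3 (l3 x2 x3 x4) x1 x5)
      + ((-1 : ℤ)) ^ ((a + 1) * ((b + 1) + (c + 1) + (e + 1)) + (d + 1) * (e + 1)) •
          castRaw (show b + c + e + 1 + a + d + 1 = a + b + c + d + e + 2 by omega)
            (l3 (l3 x2 x3 x5) x1 x4)
      - ((-1 : ℤ)) ^ ((a + 1) * ((b + 1) + (d + 1) + (e + 1)) + (c + 1) * ((d + 1) + (e + 1))) •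
          castRaw (show b + d + e + 1 + a + c + 1 = a + b + c + d + e + 2 by omega)
            (l3 (l3 x2 x4 x5) x1 x3)
      + ((-1 : ℤ)) ^ (((a + 1) + (b + 1)) * ((c + 1) + (d + 1) + (e + 1))) •
          castRaw (show c + d + e + 1 + a + b + 1 = a + b + c + d + e + 2 by omega)
            (l3 (l3 x3 x4 x5) x1 x2)
      = 0

end GradedStructures

section TwistHom

variable {A₁ A₂ : Type*} [AddCommGroup A₁] [Module ℂ A₁] [AddCommGroup A₂] [Module ℂ A₂]

/-- `e^Ĥ = Id + Ĥ` as a linear endomorphism of `A₁ ⊕ A₂`. -/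
def eHp (H : A₂ →ₗ[ℂ] A₁) : (A₁ × A₂) →ₗ[ℂ] (A₁ × A₂) :=
  LinearMap.id + (LinearMap.inl ℂ A₁ A₂).comp (H.comp (LinearMap.snd ℂ A₁ A₂))

/-- `e^{-Ĥ} = Id - Ĥ` as a linear endomorphism of `A₁ ⊕ A₂`. -/
def eHm (H : A₂ →ₗ[ℂ] A₁) : (A₁ × A₂) →ₗ[ℂ] (A₁ × A₂) :=
  LinearMap.id - (LinearMap.inl ℂ A₁ A₂).comp (H.comp (LinearMap.snd ℂ A₁ A₂))

end TwistHom

end LCAF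

/-!
Iterating the Nijenhuis identity gives, for all `p, q`,
`[N^p a_λ N^q b] = N^q [N^p a_λ b] + N^p [a_λ N^q b] - N^{p+q} [a_λ b]`.
Expanding the deformed brackets with it yields (iii) and (v), and shows that `N^k` and every
combination `c₁ N^k + c₂ N^l` are again Nijenhuis operators. Since `[·_λ·]_P` is linear in `P`,
(i) and (iv) follow from the fact that deforming a Lie conformal bracket by any Nijenhuis
operator `P` gives a Lie conformal bracket, and (ii) is (v) rewritten with (iii).
For that fact, `P ∂ = ∂ P` carries sesquilinearity and skew-symmetry over to `[·_λ·]_P`, and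
each term of the Jacobi identity for `[·_λ·]_P` is one and the same combination (`nijExpand`)
of the corresponding terms for `[·_λ·]` at `a, b, c` and their images under `P`; so the
Jacobi identity for `[·_λ·]` implies it for `[·_λ·]_P`.
-/

namespace LCAF

section Additive

variable {G H : Type*} [AddGroup G] [AddGroup H] {f : G → H}

theorem map_zero_of_map_add (hf : ∀ x y, f (x + y) = f x + f y) : f 0 = 0 :=
  (AddMonoidHom.mk' f hf).map_zero

theorem map_sub_of_map_add (hf : ∀ x y, f (x + y) = f x + f y) (x y : G) :
    f (x - y) = f x - f y :=
  (AddMonoidHom.mk' f hf).map_sub x y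

end Additive

section Coefficients

variable {A : Type*} [AddCommGroup A] {k : ℕ}

theorem monMul_add (α : Fin k →₀ ℕ) (p q : MP k A) :
    monMul α (p + q) = monMul α p + monMul α q :=
  Finsupp.mapDomain_add

theorem monMul_sub (α : Fin k →₀ ℕ) (p q : MP k A) :
    monMul α (p - q) = monMul α p - monMul α q :=
  map_sub_of_map_add (monMul_add α) p q

theorem renameV_add {k' : ℕ} (h : Fin k → Fin k') (p q : MP k A) :
    renameV h (p + q) = renameV h p + renameV h q :=
  Finsupp.mapDomain_add

theorem renameV_sub {k' : ℕ} (h : Fin k → Fin k') (p q : MP k A) :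
    renameV h (p - q) = renameV h p - renameV h q :=
  map_sub_of_map_add (renameV_add h) p q

variable [Module ℂ A]

@[simp]
theorem mapCoeff_apply (P : A →ₗ[ℂ] A) (p : MP k A) (β : Fin k →₀ ℕ) :
    mapCoeff P p β = P (p β) :=
  Finsupp.mapRange_apply

theorem mapCoeff_add (P : A →ₗ[ℂ] A) (p q : MP k A) :
    mapCoeff P (p + q) = mapCoeff P p + mapCoeff P q := by
  ext; simp

theorem mapCoeff_sub (P : A →ₗ[ℂ] A) (p q : MP k A) :
    mapCoeff P (p - q) = mapCoeff P p - mapCoeff P q := by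
  ext; simp

theorem mapCoeff_neg (P : A →ₗ[ℂ] A) (p : MP k A) : mapCoeff P (-p) = -mapCoeff P p := by
  ext; simp

theorem mapCoeff_smul (P : A →ₗ[ℂ] A) (r : ℂ) (p : MP k A) :
    mapCoeff P (r • p) = r • mapCoeff P p := by
  ext; simp

theorem mapCoeff_sum {ι : Type*} (P : A →ₗ[ℂ] A) (s : Finset ι) (f : ι → MP k A) :
    mapCoeff P (∑ i ∈ s, f i) = ∑ i ∈ s, mapCoeff P (f i) := by
  ext; simp [Finsupp.finsetSum_apply]

theorem mapCoeff_one (p : MP k A) : mapCoeff (1 : Module.End ℂ A) p = p := by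
  ext; simp

theorem mapCoeff_mul (P Q : Module.End ℂ A) (p : MP k A) :
    mapCoeff (P * Q) p = mapCoeff P (mapCoeff Q p) := by
  ext; simp

theorem mapCoeff_pow_pow (P : Module.End ℂ A) (m n : ℕ) (p : MP k A) :
    mapCoeff (P ^ m) (mapCoeff (P ^ n) p) = mapCoeff (P ^ (m + n)) p := by
  rw [pow_add, mapCoeff_mul]

theorem mapCoeff_add' (P Q : Module.End ℂ A) (p : MP k A) :
    mapCoeff (P + Q) p = mapCoeff P p + mapCoeff Q p := by
  ext; simp

theorem mapCoeff_smul' (r : ℂ) (P : Module.End ℂ A) (p : MP k A) :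
    mapCoeff (r • P) p = r • mapCoeff P p := by
  ext; simp

theorem mapCoeff_comm {P Q : A →ₗ[ℂ] A} (h : ∀ x, P (Q x) = Q (P x)) (p : MP k A) :
    mapCoeff P (mapCoeff Q p) = mapCoeff Q (mapCoeff P p) := by
  ext; simp [h]

theorem mapCoeff_monMul (P : A →ₗ[ℂ] A) (α : Fin k →₀ ℕ) (p : MP k A) :
    mapCoeff P (monMul α p) = monMul α (mapCoeff P p) :=
  (Finsupp.mapDomain_mapRange _ _ _ _ (map_add P)).symm

theorem mapCoeff_renameV {k' : ℕ} (P : A →ₗ[ℂ] A) (h : Fin k → Fin k') (p : MP k A) :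
    mapCoeff P (renameV h p) = renameV h (mapCoeff P p) :=
  (Finsupp.mapDomain_mapRange _ _ _ _ (map_add P)).symm

theorem scaleP_add (q : MP k ℂ) (p p' : MP k A) :
    scaleP q (p + p') = scaleP q p + scaleP q p' := by
  simp only [scaleP, Finsupp.sum, monMul_add, smul_add, Finset.sum_add_distrib]

theorem mapCoeff_scaleP (P : A →ₗ[ℂ] A) (q : MP k ℂ) (p : MP k A) :
    mapCoeff P (scaleP q p) = scaleP q (mapCoeff P p) := by
  simp only [scaleP, Finsupp.sum, mapCoeff_sum, mapCoeff_smul, mapCoeff_monMul]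

end Coefficients

section Substitution

variable {A : Type*} [AddCommGroup A] [Module ℂ A] {k : ℕ}

def IsCoeffEquivariant (P : A →ₗ[ℂ] A) (f : MP k A → MP k A) : Prop :=
  (∀ p q, f (p + q) = f p + f q) ∧ ∀ p, f (mapCoeff P p) = mapCoeff P (f p)

theorem isCoeffEquivariant_id (P : A →ₗ[ℂ] A) : IsCoeffEquivariant (k := k) P id :=
  ⟨fun _ _ => rfl, fun _ => rfl⟩

namespace IsCoeffEquivariant

variable {P : A →ₗ[ℂ] A}

theorem comp {f g : MP k A → MP k A} (hf : IsCoeffEquivariant P f)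
    (hg : IsCoeffEquivariant P g) : IsCoeffEquivariant P (f ∘ g) :=
  ⟨fun p q => by simp only [Function.comp, hg.1, hf.1],
    fun p => by simp only [Function.comp, hg.2, hf.2]⟩

theorem iterate {f : MP k A → MP k A} (hf : IsCoeffEquivariant P f) (n : ℕ) :
    IsCoeffEquivariant P f^[n] := by
  induction n with
  | zero => exact isCoeffEquivariant_id P
  | succ n ih => exact ih.comp hf

theorem foldr_comp (L : List (MP k A → MP k A)) (h : ∀ f ∈ L, IsCoeffEquivariant P f) :
    IsCoeffEquivariant P (L.foldr (· ∘ ·) id) := by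
  induction L with
  | nil => exact isCoeffEquivariant_id P
  | cons f L ih =>
    exact (h f List.mem_cons_self).comp (ih fun g hg => h g (List.mem_cons_of_mem f hg))

end IsCoeffEquivariant

variable (D : A →ₗ[ℂ] A)

theorem isCoeffEquivariant_opnd {P : A →ₗ[ℂ] A} (hPD : ∀ x, P (D x) = D (P x))
    (q : MP k ℂ) (c : ℂ) : IsCoeffEquivariant P (opnd D q c) := by
  refine ⟨fun p p' => ?_, fun p => ?_⟩
  · simp only [opnd, scaleP_add, mapCoeff_add, smul_add]
    abel
  · simp only [opnd, mapCoeff_add, mapCoeff_smul, mapCoeff_scaleP, mapCoeff_comm hPD]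

theorem isCoeffEquivariant_substFun_term {k' : ℕ} {P : A →ₗ[ℂ] A}
    (hPD : ∀ x, P (D x) = D (P x)) (q : Fin k → MP k' ℂ) (c : Fin k → ℂ)
    (α : Fin k →₀ ℕ) :
    IsCoeffEquivariant P
      ((List.ofFn fun i : Fin k => (opnd D (q i) (c i))^[α i]).foldr (· ∘ ·) id) := by
  refine IsCoeffEquivariant.foldr_comp _ fun f hf => ?_
  obtain ⟨i, rfl⟩ := List.mem_ofFn.mp hf
  exact (isCoeffEquivariant_opnd D hPD (q i) (c i)).iterate _

variable {k' : ℕ} (q : Fin k → MP k' ℂ) (c : Fin k → ℂ)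

theorem substFun_add (p p' : MP k A) :
    substFun D q c (p + p') = substFun D q c p + substFun D q c p' := by
  have hterm := isCoeffEquivariant_substFun_term D (P := 1) (fun _ => rfl) q c
  refine Finsupp.sum_add_index' (fun α => ?_) (fun α m n => ?_)
  · rw [Finsupp.single_zero, map_zero_of_map_add (hterm α).1]
  · rw [Finsupp.single_add, (hterm α).1]

theorem substFun_sub (p p' : MP k A) :
    substFun D q c (p - p') = substFun D q c p - substFun D q c p' :=
  map_sub_of_map_add (substFun_add D q c) p p'

theorem substFun_mapCoeff {P : A →ₗ[ℂ] A} (hPD : ∀ x, P (D x) = D (P x)) (p : MP k A) :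
    substFun D q c (mapCoeff P p) = mapCoeff P (substFun D q c p) := by
  have hterm := isCoeffEquivariant_substFun_term D hPD q c
  rw [substFun, mapCoeff, Finsupp.sum_mapRange_index fun α => by
    rw [Finsupp.single_zero, map_zero_of_map_add (hterm α).1],
    substFun, Finsupp.sum, Finsupp.sum, mapCoeff_sum]
  refine Finset.sum_congr rfl fun α _ => ?_
  rw [← (hterm α).2, mapCoeff, Finsupp.mapRange_single]

theorem sub1_add (p p' : MP 1 A) : sub1 D (p + p') = sub1 D p + sub1 D p' :=
  substFun_add D _ _ p p'

theorem sub1_sub (p p' : MP 1 A) : sub1 D (p - p') = sub1 D p - sub1 D p' :=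
  substFun_sub D _ _ p p'

theorem sub1_mapCoeff {P : A →ₗ[ℂ] A} (hPD : ∀ x, P (D x) = D (P x)) (p : MP 1 A) :
    sub1 D (mapCoeff P p) = mapCoeff P (sub1 D p) :=
  substFun_mapCoeff D _ _ hPD p

end Substitution

section ExtendedBrackets

variable {A : Type*} [AddCommGroup A] [Module ℂ A] (D : A →ₗ[ℂ] A) {F : A → A → MP 1 A}
  {P : A →ₗ[ℂ] A} (q : MP 2 ℂ) (t : ℂ)

theorem opE_add_right (hF : ∀ a b c, F a (b + c) = F a b + F a c) (a b c : A) :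
    opE D F q t a (b + c) = opE D F q t a b + opE D F q t a c := by
  rw [opE, hF, substFun_add]
  rfl

theorem opR_add (hF : ∀ a b c, F a (b + c) = F a b + F a c) (a : A) (p p' : MP 2 A) :
    opR D F q t a (p + p') = opR D F q t a p + opR D F q t a p' := by
  refine Finsupp.sum_add_index' (fun β => ?_) (fun β x y => ?_)
  · rw [map_zero_of_map_add (opE_add_right D q t hF a), map_zero_of_map_add (monMul_add β)]
  · rw [opE_add_right D q t hF, monMul_add]

theorem opR_sub (hF : ∀ a b c, F a (b + c) = F a b + F a c) (a : A) (p p' : MP 2 A) :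
    opR D F q t a (p - p') = opR D F q t a p - opR D F q t a p' :=
  map_sub_of_map_add (opR_add D q t hF a) p p'

theorem mapCoeff_opR (a : A) (p : MP 2 A) :
    mapCoeff P (opR D F q t a p) =
      p.sum fun β x => monMul β (mapCoeff P (opE D F q t a x)) := by
  rw [opR, Finsupp.sum, Finsupp.sum, mapCoeff_sum]
  simp only [mapCoeff_monMul]

theorem opR_mapCoeff (hF : ∀ a b c, F a (b + c) = F a b + F a c) (a : A) (p : MP 2 A) :
    opR D F q t a (mapCoeff P p) = p.sum fun β x => monMul β (opE D F q t a (P x)) :=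
  Finsupp.sum_mapRange_index fun β => by
    rw [map_zero_of_map_add (opE_add_right D q t hF a), map_zero_of_map_add (monMul_add β)]

theorem opE_deformBr (hPD : ∀ x, P (D x) = D (P x)) (a b : A) :
    opE D (deformBr F P) q t a b =
      opE D F q t (P a) b + opE D F q t a (P b) - mapCoeff P (opE D F q t a b) := by
  simp only [opE, deformBr, substFun_sub, substFun_add, substFun_mapCoeff D _ _ hPD]

theorem opE_map_map (hN : IsNijenhuis D F P) (a b : A) :
    opE D F q t (P a) (P b) =
      mapCoeff P (opE D F q t (P a) b + opE D F q t a (P b)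
        - mapCoeff P (opE D F q t a b)) := by
  simp only [opE, hN.2, substFun_mapCoeff D _ _ hN.1, substFun_sub, substFun_add]

theorem opR_deformBr (hF : ∀ a b c, F a (b + c) = F a b + F a c)
    (hPD : ∀ x, P (D x) = D (P x)) (a : A) (p : MP 2 A) :
    opR D (deformBr F P) q t a p =
      opR D F q t (P a) p + opR D F q t a (mapCoeff P p) - mapCoeff P (opR D F q t a p) := by
  rw [opR_mapCoeff D q t hF, mapCoeff_opR]
  simp only [opR, opE_deformBr D q t hPD, monMul_sub, monMul_add, Finsupp.sum,
    Finset.sum_sub_distrib, Finset.sum_add_distrib]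

theorem opR_map_mapCoeff (hF : ∀ a b c, F a (b + c) = F a b + F a c)
    (hN : IsNijenhuis D F P) (a : A) (p : MP 2 A) :
    opR D F q t (P a) (mapCoeff P p) =
      mapCoeff P (opR D F q t (P a) p + opR D F q t a (mapCoeff P p)
        - mapCoeff P (opR D F q t a p)) := by
  rw [opR_mapCoeff D q t hF, opR_mapCoeff D q t hF, mapCoeff_sub, mapCoeff_add,
    mapCoeff_opR, mapCoeff_opR]
  simp only [Finsupp.sum, mapCoeff_sum, opE_map_map D q t hN, mapCoeff_monMul, mapCoeff_sub,
    mapCoeff_add, monMul_sub, monMul_add, Finset.sum_sub_distrib, Finset.sum_add_distrib]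

end ExtendedBrackets

section Deformation

variable {A : Type*} [AddCommGroup A] [Module ℂ A] {D : A →ₗ[ℂ] A} {F : A → A → MP 1 A}
  {P : A →ₗ[ℂ] A}

theorem IsNijenhuis.mapCoeff_deformBr (hN : IsNijenhuis D F P) (a b : A) :
    mapCoeff P (deformBr F P a b) = F (P a) (P b) :=
  (hN.2 a b).symm

theorem IsNijenhuis.flip (hN : IsNijenhuis D F P) : IsNijenhuis D (fun a b => F b a) P :=
  ⟨hN.1, fun a b => by beta_reduce; rw [hN.2 b a, add_comm (F (P b) a)]⟩

theorem deformBr_flip : deformBr (fun a b => F b a) P = fun a b => deformBr F P b a := by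
  funext a b
  simp only [deformBr, add_comm (F b (P a))]

/-- What a term `τ a b c` of the Jacobi identity becomes when `[·_λ·]` is replaced by
`[·_λ·]_P` for a Nijenhuis operator `P` (`opR_renameV_deformBr`, `opL_renameV_deformBr`). -/
def nijExpand {k : ℕ} (P : A →ₗ[ℂ] A) (τ : A → A → A → MP k A) (a b c : A) : MP k A :=
  τ (P a) (P b) c + τ (P a) b (P c) + τ a (P b) (P c)
    - mapCoeff P (τ (P a) b c + τ a (P b) c + τ a b (P c)) + mapCoeff P (mapCoeff P (τ a b c))

theorem nijExpand_reverse {k : ℕ} (τ : A → A → A → MP k A) (a b c : A) :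
    nijExpand P (fun x y z => τ z y x) c b a = nijExpand P τ a b c := by
  simp only [nijExpand, mapCoeff_add]
  abel

theorem nijExpand_eq_add_swap {k : ℕ} {τ σ ρ : A → A → A → MP k A}
    (h : ∀ x y z, τ x y z = σ x y z + ρ y x z) (a b c : A) :
    nijExpand P τ a b c = nijExpand P σ a b c + nijExpand P ρ b a c := by
  simp only [nijExpand, h, mapCoeff_add]
  abel

variable (q : MP 2 ℂ) (t : ℂ) (r : Fin 1 → Fin 2)

theorem opR_renameV_deformBr (hF : ∀ a b c, F a (b + c) = F a b + F a c)
    (hN : IsNijenhuis D F P) (a b c : A) :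
    opR D (deformBr F P) q t a (renameV r (deformBr F P b c)) =
      nijExpand P (fun x y z => opR D F q t x (renameV r (F y z))) a b c := by
  rw [opR_deformBr D q t hF hN.1, mapCoeff_renameV, hN.mapCoeff_deformBr]
  simp only [deformBr, renameV_sub, renameV_add, ← mapCoeff_renameV,
    opR_sub D q t hF, opR_add D q t hF, opR_map_mapCoeff D q t hF hN, nijExpand,
    mapCoeff_add, mapCoeff_sub]
  abel

theorem opL_renameV_deformBr (hF : ∀ a b c, F (a + b) c = F a c + F b c)
    (hN : IsNijenhuis D F P) (a b c : A) :
    opL D (deformBr F P) q t (renameV r (deformBr F P a b)) c =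
      nijExpand P (fun x y z => opL D F q t (renameV r (F x y)) z) a b c := by
  -- `opL D F` is, by definition, `opR` of the opposite bracket `fun x y => F y x`.
  have h := opR_renameV_deformBr (F := fun x y => F y x) q t r (fun a b c => hF b c a)
    hN.flip c b a
  rw [deformBr_flip] at h
  rw [← nijExpand_reverse]
  exact h

theorem IsLCA.jacobi_deformBr (hL : IsLCA D F) (hN : IsNijenhuis D F P) (a b c : A) :
    opR D (deformBr F P) (Xv 0) 0 a (renameV (fun _ => (1 : Fin 2)) (deformBr F P b c)) =
      opL D (deformBr F P) (Xv 0 + Xv 1) 0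
          (renameV (fun _ => (0 : Fin 2)) (deformBr F P a b)) c +
        opR D (deformBr F P) (Xv 1) 0 b
          (renameV (fun _ => (0 : Fin 2)) (deformBr F P a c)) := by
  rw [opR_renameV_deformBr _ _ _ hL.add_right hN, opL_renameV_deformBr _ _ _ hL.add_left hN,
    opR_renameV_deformBr _ _ _ hL.add_right hN]
  exact nijExpand_eq_add_swap hL.jacobi a b c

theorem IsLCA.deformBr (hL : IsLCA D F) (hN : IsNijenhuis D F P) :
    IsLCA D (deformBr F P) where
  add_left a b c := by
    simp only [LCAF.deformBr, map_add, hL.add_left, mapCoeff_add]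
    abel
  smul_left r a b := by
    simp only [LCAF.deformBr, map_smul, hL.smul_left, mapCoeff_smul]
    module
  add_right a b c := by
    simp only [LCAF.deformBr, map_add, hL.add_right, mapCoeff_add]
    abel
  smul_right r a b := by
    simp only [LCAF.deformBr, map_smul, hL.smul_right, mapCoeff_smul]
    module
  sesq_left a b := by
    simp only [LCAF.deformBr, hN.1, hL.sesq_left, mapCoeff_neg, mapCoeff_monMul, monMul_add,
      monMul_sub]
    abel
  sesq_right a b := by
    simp only [LCAF.deformBr, hN.1, hL.sesq_right, mapCoeff_add, mapCoeff_sub, mapCoeff_monMul,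
      mapCoeff_comm hN.1, monMul_add, monMul_sub]
    abel
  skew a b := by
    simp only [LCAF.deformBr, hL.skew (P a) b, hL.skew a (P b), hL.skew a b, sub1_add, sub1_sub,
      sub1_mapCoeff D hN.1, mapCoeff_neg]
    abel
  jacobi := hL.jacobi_deformBr hN

end Deformation

section Powers

variable {A : Type*} [AddCommGroup A] [Module ℂ A] {D : A →ₗ[ℂ] A} {F : A → A → MP 1 A}
  {N : Module.End ℂ A}

theorem deformBr_smul_add_smul (hL : IsLCA D F) (c₁ c₂ : ℂ) (P Q : Module.End ℂ A) :
    deformBr F (c₁ • P + c₂ • Q) =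
      fun a b => c₁ • deformBr F P a b + c₂ • deformBr F Q a b := by
  funext a b
  simp only [deformBr, LinearMap.add_apply, LinearMap.smul_apply, hL.add_left, hL.smul_left,
    hL.add_right, hL.smul_right, mapCoeff_add', mapCoeff_smul']
  module

theorem IsNijenhuis.commute (hN : IsNijenhuis D F N) : Commute N D :=
  LinearMap.ext hN.1

theorem IsNijenhuis.map_pow_map_pow (hN : IsNijenhuis D F N) (p q : ℕ) (a b : A) :
    F ((N ^ p) a) ((N ^ q) b) =
      mapCoeff (N ^ q) (F ((N ^ p) a) b) + mapCoeff (N ^ p) (F a ((N ^ q) b))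
        - mapCoeff (N ^ (p + q)) (F a b) := by
  have hsucc : ∀ n x, N ((N ^ n) x) = (N ^ (n + 1)) x := fun n x => by
    rw [pow_succ', Module.End.mul_apply]
  have hsucc' : ∀ n (x : MP 1 A), mapCoeff N (mapCoeff (N ^ n) x) = mapCoeff (N ^ (n + 1)) x :=
    fun n x => by rw [pow_succ', mapCoeff_mul]
  induction p generalizing q a b with
  | zero =>
    simp only [pow_zero, Module.End.one_apply, mapCoeff_one, zero_add]
    abel
  | succ p ihp =>
    induction q generalizing a b with
    | zero =>
      simp only [pow_zero, Module.End.one_apply, mapCoeff_one, add_zero]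
      abel
    | succ q ihq =>
      have h := hN.2 ((N ^ p) a) ((N ^ q) b)
      rw [hsucc, hsucc] at h
      rw [h, ihq, ihp, ihp]
      simp only [mapCoeff_add, mapCoeff_sub, hsucc',
        show p + 1 + q + 1 = p + q + 2 by omega, show p + (q + 1) + 1 = p + q + 2 by omega,
        show p + q + 1 + 1 = p + q + 2 by omega, show p + 1 + (q + 1) = p + q + 2 by omega]
      abel

theorem IsNijenhuis.pow (hN : IsNijenhuis D F N) (k : ℕ) : IsNijenhuis D F (N ^ k) :=
  ⟨LinearMap.congr_fun (hN.commute.pow_left k), fun a b => by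
    rw [mapCoeff_sub, mapCoeff_add, mapCoeff_pow_pow]
    exact hN.map_pow_map_pow k k a b⟩

theorem IsNijenhuis.smul_pow_add_smul_pow (hL : IsLCA D F) (hN : IsNijenhuis D F N)
    (c₁ c₂ : ℂ) (k l : ℕ) : IsNijenhuis D F (c₁ • N ^ k + c₂ • N ^ l) := by
  refine ⟨LinearMap.congr_fun (((hN.commute.pow_left k).smul_left c₁).add_left
    ((hN.commute.pow_left l).smul_left c₂)), fun a b => ?_⟩
  simp only [LinearMap.add_apply, LinearMap.smul_apply, hL.add_left, hL.smul_left,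
    hL.add_right, hL.smul_right, mapCoeff_add', mapCoeff_smul', mapCoeff_add, mapCoeff_sub,
    mapCoeff_smul, hN.map_pow_map_pow, mapCoeff_pow_pow, add_comm l k]
  module

theorem IsNijenhuis.deformBr_deformBr_pow (hN : IsNijenhuis D F N) (k l : ℕ) (a b : A) :
    deformBr (deformBr F (N ^ k)) (N ^ l) a b = deformBr F (N ^ (k + l)) a b := by
  simp only [deformBr, ← Module.End.mul_apply, ← pow_add, mapCoeff_add, mapCoeff_sub,
    mapCoeff_pow_pow]
  rw [hN.map_pow_map_pow l k, hN.map_pow_map_pow k l, add_comm l k]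
  abel

theorem IsNijenhuis.mapCoeff_pow_deformBr (hN : IsNijenhuis D F N) (k l : ℕ) (a b : A) :
    mapCoeff (N ^ l) (deformBr F (N ^ (k + l)) a b) =
      deformBr F (N ^ k) ((N ^ l) a) ((N ^ l) b) := by
  simp only [deformBr, ← Module.End.mul_apply, ← pow_add, mapCoeff_add, mapCoeff_sub,
    mapCoeff_pow_pow]
  rw [hN.map_pow_map_pow (k + l) l, hN.map_pow_map_pow l (k + l), hN.map_pow_map_pow l l]
  simp only [mapCoeff_add, mapCoeff_sub, mapCoeff_pow_pow,
    show l + (k + l) = k + l + l by omega, show k + (l + l) = k + l + l by omega]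
  abel

end Powers

/-- Properties of powers of a Nijenhuis operator `N` on a Lie
conformal algebra `(A, [·_λ·])`: for all `k, l ∈ ℕ`,
(i) `[·_λ·]_{N^k}` is a Lie conformal algebra bracket;
(ii) `N^l` is a Nijenhuis operator on `(A, [·_λ·]_{N^k})`;
(iii) `([·_λ·]_{N^k})_{N^l} = [·_λ·]_{N^{k+l}}`;
(iv) `[·_λ·]_{N^k}` and `[·_λ·]_{N^l}` are compatible;
(v) `N^l : (A, [·_λ·]_{N^{k+l}}) → (A, [·_λ·]_{N^k})` is a homomorphism. -/
theorem statement19 {A : Type*} [AddCommGroup A] [Module ℂ A]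
    (D : A →ₗ[ℂ] A) (br : A → A → MP 1 A) (hL : IsLCA D br)
    (N : Module.End ℂ A) (hN : IsNijenhuis D br N) (k l : ℕ) :
    IsLCA D (deformBr br (N ^ k)) ∧
    IsNijenhuis D (deformBr br (N ^ k)) (N ^ l) ∧
    (∀ a b : A,
      deformBr (deformBr br (N ^ k)) (N ^ l) a b = deformBr br (N ^ (k + l)) a b) ∧
    (∀ c₁ c₂ : ℂ,
      IsLCA D (fun a b => c₁ • deformBr br (N ^ k) a b +
        c₂ • deformBr br (N ^ l) a b)) ∧
    (∀ a b : A,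
      mapCoeff (N ^ l) (deformBr br (N ^ (k + l)) a b) =
        deformBr br (N ^ k) ((N ^ l) a) ((N ^ l) b)) := by
  have hComp := hN.deformBr_deformBr_pow k l
  have hHom := hN.mapCoeff_pow_deformBr k l
  refine ⟨hL.deformBr (hN.pow k), ⟨(hN.pow l).1, fun a b => ?_⟩, hComp, fun c₁ c₂ => ?_, hHom⟩
  · rw [← hHom, ← hComp]
    rfl
  · rw [← deformBr_smul_add_smul hL]
    exact hL.deformBr (hN.smul_pow_add_smul_pow hL c₁ c₂ k l)

end LCAF
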